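/- Let H ≤ Sym(Δ), K ≤ Sym(Ψ), G ≤ Sym(Ω) be nontrivial finite permutation groups. Fix ψ ∈ Ψ and for ω ∈ Ω let Γ(ω) be the set of functions f : Ω → Ψ with f(ω) = ψ and f constant, different from ψ, on Ω ∖ {ω}. Then the sets Γ(ω) ⊆ Ψ^Ω are pairwise disjoint, each of size |Ψ| − 1, and the assignment ω ↦ Γ(ω) is equivariant for the action of G: Γ(ω^g) = Γ(ω)^g for all g ∈ G, where G acts on Ψ^Ω as the top group of the product-action wreath product K ≀_pa G. Hence G ≤ Sym(Ω) is P-embedded of degree |Ψ| − 1 in K ≀_pa G ≤ Sym(Ψ^Ω). -/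
import Mathlib


/-- The coordinate-permuting action of `G` on the base group `Ω → K`. -/
def permAut (G : Type*) [Group G] (Ω : Type*) [MulAction G Ω] (S : Type*) [Group S] :
    G →* MulAut (Ω → S) where
  toFun g := MulEquiv.arrowCongr (MulAction.toPerm g) (MulEquiv.refl S)
  map_one' := by ext f σ; simp
  map_mul' g h := by ext f σ; simp [mul_smul]

/-- The wreath product `K ≀_pa G = (Ω → K) ⋊ G`. -/
abbrev Wr (S : Type*) [Group S] (G : Type*) [Group G] (Ω : Type*) [MulAction G Ω] :=
  SemidirectProduct (Ω → S) G (permAut G Ω S)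

/-- The product action of `K ≀_pa G` on `Ψ^Ω`. -/
def paSmul {K G Om Psi : Type*} [Group K] [Group G] [MulAction G Om] [MulAction K Psi]
    (w : Wr K G Om) (f : Om → Psi) : Om → Psi :=
  fun τ => w.left τ • f (w.right⁻¹ • τ)

/-- Fix `ψ ∈ Ψ` and, for `ω ∈ Ω`, let `Γ(ω)` be the set of `f : Ω → Ψ` with `f(ω) = ψ` and
`f` constant and different from `ψ` on `Ω ∖ {ω}`.  Then the sets `Γ(ω)` are pairwise
disjoint of size `|Ψ| − 1`, the map `ω ↦ Γ(ω)` is `G`-equivariant for the top-group action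
on `Ψ^Ω`, and hence `G ≤ Sym(Ω)` is P-embedded of degree `|Ψ| − 1` in
`K ≀_pa G ≤ Sym(Ψ^Ω)` via `ι = inr` and `Γ`. -/
theorem top_group_P_embedded
    (H K G : Type*) [Group H] [Group K] [Group G]
    [Finite H] [Finite K] [Finite G] [Nontrivial H] [Nontrivial K] [Nontrivial G]
    (De Psi Om : Type*) [Fintype De] [Fintype Psi] [Fintype Om]
    [MulAction H De] [FaithfulSMul H De] [MulAction K Psi] [FaithfulSMul K Psi]
    [MulAction G Om] [FaithfulSMul G Om]
    (hOm : 2 ≤ Fintype.card Om) (hPsi : 2 ≤ Fintype.card Psi)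
    (ψ : Psi)
    (Γ : Om → Set (Om → Psi))
    (hΓ : ∀ ω, Γ ω = {f : Om → Psi |
      f ω = ψ ∧ ∃ c : Psi, c ≠ ψ ∧ ∀ ω' : Om, ω' ≠ ω → f ω' = c}) :
    (∀ ω ω' : Om, ω ≠ ω' → Disjoint (Γ ω) (Γ ω')) ∧
    (∀ ω, (Γ ω).ncard = Fintype.card Psi - 1) ∧
    (∀ (g : G) (ω : Om), Γ (g • ω) = (fun f : Om → Psi => fun τ => f (g⁻¹ • τ)) '' Γ ω) ∧
    Function.Injective Γ ∧
    Function.Injective (SemidirectProduct.inr : G →* Wr K G Om) ∧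
    ∀ (g : G) (ω : Om),
      Γ (g • ω) = paSmul ((SemidirectProduct.inr : G →* Wr K G Om) g) '' Γ ω := by
  classical
  have hdisj : ∀ ω ω' : Om, ω ≠ ω' → Disjoint (Γ ω) (Γ ω') := by
    intro ω ω' hne
    rw [Set.disjoint_left]
    intro f hf hf'
    rw [hΓ] at hf hf'
    obtain ⟨h1, c, hc, h2⟩ := hf
    obtain ⟨h1', c', hc', h2'⟩ := hf'
    exact hc' ((h2' ω hne).symm.trans h1)
  have hequiv : ∀ (g : G) (ω : Om),
      Γ (g • ω) = (fun f : Om → Psi => fun τ => f (g⁻¹ • τ)) '' Γ ω := by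
    intro g ω
    ext h
    simp only [hΓ, Set.mem_image, Set.mem_setOf_eq]
    constructor
    · rintro ⟨h1, c, hc, h2⟩
      refine ⟨fun τ => h (g • τ), ⟨h1, c, hc, fun ω' hω' => ?_⟩, ?_⟩
      · exact h2 (g • ω') (fun e => hω' (smul_left_cancel g e))
      · funext τ; simp [smul_inv_smul]
    · rintro ⟨f, ⟨h1, c, hc, h2⟩, rfl⟩
      refine ⟨by simp [inv_smul_smul, h1], c, hc, fun τ hτ => ?_⟩
      exact h2 (g⁻¹ • τ) (fun e => hτ (by rw [← e, smul_inv_smul]))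
  have hne' : ∃ c : Psi, c ≠ ψ := by
    have : Nontrivial Psi := Fintype.one_lt_card_iff_nontrivial.mp hPsi
    exact exists_ne ψ
  have hnonempty : ∀ ω : Om, (Γ ω).Nonempty := by
    intro ω
    obtain ⟨c, hc⟩ := hne'
    exact ⟨fun τ => if τ = ω then ψ else c, by
      rw [hΓ]
      exact ⟨by simp, c, hc, fun ω' hω' => by simp [hω']⟩⟩
  refine ⟨hdisj, ?_, hequiv, ?_, SemidirectProduct.inr_injective, ?_⟩
  · -- cardinality
    intro ω
    obtain ⟨ω₀, hω₀⟩ := Fintype.exists_ne_of_one_lt_card hOm ω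
    have himg : Γ ω = (fun c : Psi => fun τ => if τ = ω then ψ else c) '' {c | c ≠ ψ} := by
      ext f
      simp only [hΓ, Set.mem_image, Set.mem_setOf_eq]
      constructor
      · rintro ⟨h1, c, hc, h2⟩
        refine ⟨c, hc, ?_⟩
        funext τ
        by_cases hτ : τ = ω
        · simp [hτ, h1]
        · simp [hτ, h2 τ hτ]
      · rintro ⟨c, hc, rfl⟩
        exact ⟨by simp, c, hc, fun ω' hω' => by simp [hω']⟩
    rw [himg, Set.ncard_image_of_injOn]
    · rw [show {c : Psi | c ≠ ψ} = ({ψ}ᶜ : Set Psi) by ext; simp,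
        Set.ncard_eq_toFinset_card']
      simp [Set.toFinset_compl, Finset.card_compl]
    · intro a _ b _ hab
      have := congrFun hab ω₀
      simpa [hω₀] using this
  · -- injectivity of Γ
    intro ω ω' h
    by_contra hne
    obtain ⟨f, hf⟩ := hnonempty ω
    exact (Set.disjoint_left.mp (hdisj ω ω' hne) hf) (h ▸ hf)
  · -- paSmul version
    intro g ω
    have hps : paSmul ((SemidirectProduct.inr : G →* Wr K G Om) g)
        = fun f : Om → Psi => fun τ => f (g⁻¹ • τ) := by
      funext f τ
      simp [paSmul]
    rw [hps, hequiv g ω]
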